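/- arXiv:1604.01056 — 3 statements merged into one kernel-verified Lean document; each statement's English description precedes it below -/
import Mathlib

section
/- For the unstable scalar Gaussian channel (|C| > 1, D ≠ 0, K_V > 0), with optimal gain Γ* = −(C²−1)/(CD) and power constraint Γ*² K_B + K_Z ≤ κ where K_B = (D²K_Z + K_V)/(1 − (C+DΓ*)²), the optimal innovations variance is K_Z* = (D²κ + K_V(1 − C²))/(C²D²), which is nonnegative if and only if κ ≥ κ_min := (C² − 1)K_V/D². -/
/-- Unstable scalar channel (`|C| > 1`): with gain `Γ* = −(C²−1)/(CD)` and power constraint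
`Γ*²K_B + K_Z ≤ κ`, `K_B = (D²K_Z + K_V)/(1 − (C+DΓ*)²)`, the optimal innovations variance is
`K_Z* = (D²κ + K_V(1−C²))/(C²D²)`, nonnegative iff `κ ≥ κ_min = (C²−1)K_V/D²`. -/
theorem stmt_3 (C D K_V κ : ℝ) (hC : 1 < |C|) (hD : D ≠ 0) (hKV : 0 < K_V) :
    let Γstar : ℝ := -(C ^ 2 - 1) / (C * D)
    let KB : ℝ → ℝ := fun K_Z => (D ^ 2 * K_Z + K_V) / (1 - (C + D * Γstar) ^ 2)
    let KZstar : ℝ := (D ^ 2 * κ + K_V * (1 - C ^ 2)) / (C ^ 2 * D ^ 2)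
    Γstar ^ 2 * KB KZstar + KZstar = κ ∧
    (∀ K_Z : ℝ, Γstar ^ 2 * KB K_Z + K_Z ≤ κ → K_Z ≤ KZstar) ∧
    (0 ≤ KZstar ↔ (C ^ 2 - 1) * K_V / D ^ 2 ≤ κ) := by
  intro Γstar KB KZstar
  have hC0 : C ≠ 0 := by intro h; rw [h] at hC; simp at hC; linarith
  have hC2 : 1 < C ^ 2 := by
    have := sq_abs C
    nlinarith [abs_nonneg C]
  have hΓ : C + D * Γstar = 1 / C := by
    simp only [Γstar]; field_simp; ring
  have hden : 1 - (C + D * Γstar) ^ 2 = (C ^ 2 - 1) / C ^ 2 := by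
    rw [hΓ]; field_simp
  have hC21 : C ^ 2 - 1 ≠ 0 := by linarith
  have hden0 : (1 : ℝ) - (C + D * Γstar) ^ 2 ≠ 0 := by
    rw [hden]
    exact div_ne_zero hC21 (by positivity)
  have hΓsq : Γstar ^ 2 = (C ^ 2 - 1) ^ 2 / (C ^ 2 * D ^ 2) := by
    simp only [Γstar]; field_simp
  have hterm : ∀ K_Z : ℝ, Γstar ^ 2 * KB K_Z + K_Z
      = ((C ^ 2 - 1) * (D ^ 2 * K_Z + K_V) + D ^ 2 * K_Z) / D ^ 2 := by
    intro K_Z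
    simp only [KB, hden, hΓsq]
    field_simp [hC21]
  refine ⟨?_, ?_, ?_⟩
  · rw [hterm]
    simp only [KZstar]
    field_simp [hC21]
    ring
  · intro K_Z h
    rw [hterm] at h
    simp only [KZstar]
    rw [div_le_iff₀ (by positivity)] at h
    rw [le_div_iff₀ (by positivity)]
    nlinarith [sq_nonneg D]
  · simp only [KZstar]
    rw [le_div_iff₀ (by positivity), div_le_iff₀ (by positivity)]
    constructor <;> intro h <;> nlinarith [sq_nonneg D, sq_nonneg C]
end

section
/- For the stable scalar Gaussian channel (|C| < 1), the feedback capacity with power constraint E[A_i²] ≤ κ equals (1/2)ln((D²κ + K_V)/K_V), is achieved with Γ* = 0 and K_Z* = κ, and coincides with the capacity of the memoryless channel B_i = D A_i + V_i without feedback. -/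
lemma stmt5_aux (D K_V κ K_Z : ℝ) (hD : D ≠ 0) (hKV : 0 < K_V) (h0 : 0 ≤ K_Z) (hKZ : K_Z ≤ κ) :
    (1 / 2) * Real.log ((D ^ 2 * K_Z + K_V) / K_V) ≤
      (1 / 2) * Real.log ((D ^ 2 * κ + K_V) / K_V) := by
  have hD2 : 0 < D ^ 2 := by positivity
  have h1 : 0 < D ^ 2 * K_Z + K_V := by nlinarith
  have h2 : (D ^ 2 * K_Z + K_V) / K_V ≤ (D ^ 2 * κ + K_V) / K_V := by
    have : D ^ 2 * K_Z ≤ D ^ 2 * κ := by nlinarith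
    gcongr
  have := Real.log_le_log (div_pos h1 hKV) h2
  linarith

/-- Stable scalar channel (`|C| < 1`): the feedback capacity with power constraint κ equals
`(1/2)ln((D²κ + K_V)/K_V)`, achieved with `Γ* = 0`, `K_Z* = κ`, and coincides with the
capacity of the memoryless channel `B = DA + V` without feedback. -/
theorem stmt_5 (C D K_V κ : ℝ) (hC : |C| < 1) (hD : D ≠ 0) (hKV : 0 < K_V) (hκ : 0 ≤ κ) :
    let FBvals : Set ℝ :=
      {v | ∃ Γ K_Z : ℝ, 0 ≤ K_Z ∧ |C + D * Γ| < 1 ∧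
        Γ ^ 2 * ((D ^ 2 * K_Z + K_V) / (1 - (C + D * Γ) ^ 2)) + K_Z ≤ κ ∧
        v = (1 / 2) * Real.log ((D ^ 2 * K_Z + K_V) / K_V)}
    let noFBvals : Set ℝ :=
      {v | ∃ K_Z : ℝ, 0 ≤ K_Z ∧ K_Z ≤ κ ∧
        v = (1 / 2) * Real.log ((D ^ 2 * K_Z + K_V) / K_V)}
    IsGreatest FBvals ((1 / 2) * Real.log ((D ^ 2 * κ + K_V) / K_V)) ∧
    -- the optimum is achieved by the strategy (Γ, K_Z) = (0, κ):
    (0 ^ 2 * ((D ^ 2 * κ + K_V) / (1 - (C + D * 0) ^ 2)) + κ ≤ κ ∧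
      (1 / 2) * Real.log ((D ^ 2 * κ + K_V) / K_V) =
        (1 / 2) * Real.log ((D ^ 2 * κ + K_V) / K_V)) ∧
    IsGreatest noFBvals ((1 / 2) * Real.log ((D ^ 2 * κ + K_V) / K_V)) := by
  intro FBvals noFBvals
  have hD2 : 0 < D ^ 2 := by positivity
  refine ⟨⟨⟨0, κ, hκ, by simpa using hC, by simp, rfl⟩, ?_⟩,
    ⟨by simp, rfl⟩, ⟨κ, hκ, le_refl κ, rfl⟩, ?_⟩
  · rintro v ⟨Γ, K_Z, hKZ, hCΓ, hcon, rfl⟩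
    have hden : 0 < 1 - (C + D * Γ) ^ 2 := by
      have := abs_nonneg (C + D * Γ)
      nlinarith [sq_abs (C + D * Γ)]
    have hnum : 0 < D ^ 2 * K_Z + K_V := by nlinarith
    have hfrac : 0 ≤ Γ ^ 2 * ((D ^ 2 * K_Z + K_V) / (1 - (C + D * Γ) ^ 2)) :=
      mul_nonneg (by positivity) (div_nonneg hnum.le hden.le)
    exact stmt5_aux D K_V κ K_Z hD hKV hKZ (by linarith)
  · rintro v ⟨K_Z, hKZ, hle, rfl⟩
    exact stmt5_aux D K_V κ K_Z hD hKV hKZ hle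
end

section
/- Let A ∈ ℝ^{q×q}, G ∈ ℝ^{q×r} with (A, G) a stabilizable pair. If there exists a symmetric positive semidefinite Σ ∈ ℝ^{q×q} satisfying Σ = A Σ Aᵀ + G Gᵀ, then A is exponentially stable (all eigenvalues of A lie in the open unit disc). -/
/-!
Take a left eigenvector `x` of `A` for an eigenvalue `μ` with `|μ| ≥ 1`. Testing the Lyapunov
equation against `x` gives `x* Σ x = |μ|² x* Σ x + ‖Gᴴ x‖²`, and since `x* Σ x ≥ 0` this forces
`x* G = 0`. Then `x* (A - G K) = μ x*` for every `K`, so `μ` is also an eigenvalue of the closed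
loop matrix `A - G K`, contradicting stabilizability.
-/

open Matrix

namespace Matrix

theorem conjTranspose_map_ofReal {m n 𝕜 : Type*} [RCLike 𝕜] (B : Matrix m n ℝ) :
    (B.map (fun x : ℝ => (x : 𝕜)))ᴴ = Bᵀ.map (fun x : ℝ => (x : 𝕜)) := by
  ext; simp

variable {n m : Type*} [Fintype n] [Fintype m]

theorem mem_spectrum_iff_exists_vecMul_eq_smul [DecidableEq n] {K : Type*} [Field K]
    {M : Matrix n n K} {μ : K} : μ ∈ spectrum K M ↔ ∃ x ≠ 0, x ᵥ* M = μ • x := by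
  have hscalar (x : n → K) : x ᵥ* scalar n μ = μ • x := by
    rw [scalar_apply, ← smul_one_eq_diagonal, vecMul_smul, vecMul_one]
  rw [mem_spectrum_iff_isRoot_charpoly, Polynomial.IsRoot, eval_charpoly,
    ← exists_vecMul_eq_zero_iff]
  simp only [vecMul_sub, hscalar, sub_eq_zero, eq_comm (a := μ • _)]

open scoped ComplexOrder in
theorem PosSemidef.map_ofReal [DecidableEq n] {𝕜 : Type*} [RCLike 𝕜] {S : Matrix n n ℝ}
    (hS : S.PosSemidef) : (S.map (fun x : ℝ => (x : 𝕜))).PosSemidef := by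
  open scoped MatrixOrder in
  obtain ⟨B, rfl⟩ := CStarAlgebra.nonneg_iff_eq_star_mul_self.mp hS.nonneg
  have h := posSemidef_conjTranspose_mul_self (B.map (fun x : ℝ => (x : 𝕜)))
  rwa [conjTranspose_map_ofReal, ← Matrix.map_mul] at h

theorem map_ofReal_lyapunov {𝕜 : Type*} [RCLike 𝕜] {A S : Matrix n n ℝ} {G : Matrix n m ℝ}
    (h : S = A * S * Aᵀ + G * Gᵀ) :
    S.map (fun x : ℝ => (x : 𝕜)) =
      A.map (fun x : ℝ => (x : 𝕜)) * S.map (fun x : ℝ => (x : 𝕜)) *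
          (A.map (fun x : ℝ => (x : 𝕜)))ᴴ +
        G.map (fun x : ℝ => (x : 𝕜)) * (G.map (fun x : ℝ => (x : 𝕜)))ᴴ := by
  rw [conjTranspose_map_ofReal, conjTranspose_map_ofReal, ← Matrix.map_mul, ← Matrix.map_mul,
    ← Matrix.map_mul, ← Matrix.map_add _ (map_add (algebraMap ℝ 𝕜)), ← h]

open scoped ComplexOrder in
theorem vecMul_eq_zero_of_lyapunov {𝕜 : Type*} [RCLike 𝕜] {A S : Matrix n n 𝕜}
    {G : Matrix n m 𝕜} (hS : S.PosSemidef) (hlyap : S = A * S * Aᴴ + G * Gᴴ) {x : n → 𝕜}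
    {μ : 𝕜} (hx : x ᵥ* A = μ • x) (hμ : 1 ≤ ‖μ‖) : x ᵥ* G = 0 := by
  set w := Gᴴ *ᵥ star x with hw
  have hxG : x ᵥ* G = star w := by
    rw [hw, star_mulVec, star_star, conjTranspose_conjTranspose]
  have hAx : Aᴴ *ᵥ star x = star μ • star x := by rw [← star_vecMul, hx, star_smul]
  have hQ : 0 ≤ x ⬝ᵥ S *ᵥ star x := by simpa using hS.dotProduct_mulVec_nonneg (star x)
  have hQ_eq : x ⬝ᵥ S *ᵥ star x
      = ((‖μ‖ ^ 2 : ℝ) : 𝕜) * (x ⬝ᵥ S *ᵥ star x) + star w ⬝ᵥ w :=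
    calc x ⬝ᵥ S *ᵥ star x = (x ᵥ* A) ⬝ᵥ S *ᵥ (Aᴴ *ᵥ star x) + (x ᵥ* G) ⬝ᵥ w := by
          conv_lhs => rw [hlyap]
          simp only [add_mulVec, dotProduct_add, dotProduct_mulVec, vecMul_vecMul, hw,
            Matrix.mul_assoc]
      _ = _ := by
          rw [hx, hAx, hxG, RCLike.ofReal_pow, ← RCLike.mul_conj]
          simp only [mulVec_smul, dotProduct_smul, smul_dotProduct, smul_eq_mul, RCLike.star_def]
          ring
  have hμ2 : (1 : 𝕜) ≤ ((‖μ‖ ^ 2 : ℝ) : 𝕜) := by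
    rw [← RCLike.ofReal_one, RCLike.ofReal_le_ofReal]
    exact one_le_pow₀ hμ
  have hw_nonpos : star w ⬝ᵥ w ≤ 0 := by
    rw [show star w ⬝ᵥ w = (1 - ((‖μ‖ ^ 2 : ℝ) : 𝕜)) * (x ⬝ᵥ S *ᵥ star x) by
      linear_combination (-1 : 𝕜) * hQ_eq]
    exact mul_nonpos_of_nonpos_of_nonneg (sub_nonpos.mpr hμ2) hQ
  have hw0 : w = 0 :=
    dotProduct_star_self_eq_zero.mp (hw_nonpos.antisymm (dotProduct_star_self_nonneg w))
  rw [hxG, hw0, star_zero]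

end Matrix

/-- Converse Lyapunov criterion: if `(A, G)` is stabilizable and there exists a PSD solution of
`Σ = A Σ Aᵀ + G Gᵀ`, then all eigenvalues of `A` lie in the open unit disc. -/
theorem stmt_11 (q r : ℕ) (A : Matrix (Fin q) (Fin q) ℝ) (G : Matrix (Fin q) (Fin r) ℝ)
    (hstabilizable : ∃ K : Matrix (Fin r) (Fin q) ℝ,
      ∀ μ ∈ spectrum ℂ ((A - G * K).map (fun x : ℝ => (x : ℂ))), ‖μ‖ < 1)
    (hexists : ∃ S : Matrix (Fin q) (Fin q) ℝ, S.PosSemidef ∧ S = A * S * Aᵀ + G * Gᵀ) :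
    ∀ μ ∈ spectrum ℂ (A.map (fun x : ℝ => (x : ℂ))), ‖μ‖ < 1 := by
  obtain ⟨K, hK⟩ := hstabilizable
  obtain ⟨S, hS, hlyap⟩ := hexists
  intro μ hμ
  by_contra! hμ1
  obtain ⟨x, hx0, hx⟩ := mem_spectrum_iff_exists_vecMul_eq_smul.mp hμ
  have hxG : x ᵥ* G.map (fun x : ℝ => (x : ℂ)) = 0 :=
    vecMul_eq_zero_of_lyapunov hS.map_ofReal (map_ofReal_lyapunov hlyap) hx hμ1
  -- exposes the cast as a ring hom, so that `Matrix.map_mul` applies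
  have hc : (fun x : ℝ => (x : ℂ)) = ⇑Complex.ofRealHom := rfl
  refine (hK μ (mem_spectrum_iff_exists_vecMul_eq_smul.mpr ⟨x, hx0, ?_⟩)).not_ge hμ1
  rw [hc, Matrix.map_sub _ (map_sub _), Matrix.map_mul, ← hc, vecMul_sub, ← vecMul_vecMul, hxG,
    zero_vecMul, sub_zero, hx]
end
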